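/- arXiv:1905.04068 — 2 statements merged into one kernel-verified Lean document; each statement's English description precedes it below -/
import Mathlib

section
/- Let d ≥ 0 and let ((X_k, I_k))_{k≥0} be an i.i.d. sequence of pairs of nonnegative integrable real random variables with 0 < E[X_0] + E[I_0] < ∞. For k ≥ 1 define g_k = min{(X_{k−1} + I_k + X_k − d)^+, X_k + I_k}, T_D(k) = ∑_{j=1}^{k} (X_j + I_j), and for T > 0, M(T) = #{k ≥ 1 : T_D(k) ≤ T}. Then almost surely lim_{T→∞} (1/T) ∑_{k=1}^{M(T)} g_k = E[g_1] / (E[X_0] + E[I_0]). -/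
/-!
The reward `g_k` depends only on the two consecutive cycles `(X_{k-1}, I_{k-1})` and
`(X_k, I_k)`, so the rewards at even and at odd indices form two i.i.d. sequences and the strong
law applied to each gives `(∑_{k ≤ n} g_k) / n → E[g_1]` a.s.; likewise
`T_D(n) / n → E[X_0] + E[I_0]`. Since `T_D` is monotone, `T_D(M(T)) ≤ T < T_D(M(T) + 1)`, hence
`T / M(T) → E[X_0] + E[I_0]`, and `(1/T) ∑_{k ≤ M(T)} g_k` is the product of
`(∑_{k ≤ M(T)} g_k) / M(T)` and `M(T) / T`.
-/

open MeasureTheory ProbabilityTheory Filter Finset Topology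

theorem tendsto_atTop_of_tendsto_even_odd {α : Type*} {f : ℕ → α} {l : Filter α}
    (he : Tendsto (fun n => f (2 * n)) atTop l) (ho : Tendsto (fun n => f (2 * n + 1)) atTop l) :
    Tendsto f atTop l := by
  intro s hs
  obtain ⟨N₀, h₀⟩ := eventually_atTop.1 (he hs)
  obtain ⟨N₁, h₁⟩ := eventually_atTop.1 (ho hs)
  refine eventually_atTop.2 ⟨2 * (N₀ + N₁), fun m hm => ?_⟩
  obtain ⟨k, rfl | rfl⟩ := Nat.even_or_odd' m
  · exact h₀ k (by omega)
  · exact h₁ k (by omega)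

theorem Finset.sum_range_two_mul {M : Type*} [AddCommMonoid M] (c : ℕ → M) (n : ℕ) :
    ∑ i ∈ range (2 * n), c i = ∑ i ∈ range n, c (2 * i) + ∑ i ∈ range n, c (2 * i + 1) := by
  induction n with
  | zero => simp
  | succ n ih =>
    rw [mul_add_one, sum_range_succ, sum_range_succ, ih, sum_range_succ, sum_range_succ]
    abel

theorem Finset.sum_Icc_one_eq_sum_range {M : Type*} [AddCommMonoid M] (f : ℕ → M) (n : ℕ) :
    ∑ k ∈ Icc 1 n, f k = ∑ i ∈ range n, f (i + 1) := by
  rw [← Ico_add_one_right_eq_Icc, sum_Ico_eq_sum_range]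
  simp [add_comm]

theorem tendsto_succ_div_natCast_of_tendsto_div {a : ℕ → ℝ} {L : ℝ}
    (h : Tendsto (fun n => a n / n) atTop (𝓝 L)) :
    Tendsto (fun n => a (n + 1) / n) atTop (𝓝 L) := by
  have hratio : Tendsto (fun n : ℕ => ((n + 1 : ℕ) : ℝ) / n) atTop (𝓝 1) := by
    simpa [add_comm] using tendsto_add_mul_div_add_mul_atTop_nhds (1 : ℝ) 0 1 one_ne_zero
  have := (h.comp (tendsto_add_atTop_nat 1)).mul hratio
  rw [mul_one] at this
  refine this.congr' ?_
  filter_upwards [eventually_ne_atTop 0] with n hn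
  have : ((n + 1 : ℕ) : ℝ) ≠ 0 := by positivity
  simp only [Function.comp_apply]
  field_simp

theorem tendsto_sum_range_div_of_even_odd {c : ℕ → ℝ} {L : ℝ}
    (he : Tendsto (fun n => (∑ i ∈ range n, c (2 * i)) / n) atTop (𝓝 L))
    (ho : Tendsto (fun n => (∑ i ∈ range n, c (2 * i + 1)) / n) atTop (𝓝 L)) :
    Tendsto (fun n => (∑ i ∈ range n, c i) / n) atTop (𝓝 L) := by
  refine tendsto_atTop_of_tendsto_even_odd ?_ ?_
  · have h := (he.add ho).div_const 2
    rw [add_self_div_two] at h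
    refine h.congr' ?_
    filter_upwards [eventually_ne_atTop 0] with n hn
    rw [sum_range_two_mul]
    push_cast
    field_simp
  · have hhalf : Tendsto (fun n : ℕ => (n : ℝ) / (2 * n + 1)) atTop (𝓝 (1 / 2)) := by
      simpa [add_comm] using tendsto_add_mul_div_add_mul_atTop_nhds (0 : ℝ) 1 1 two_ne_zero
    have h := ((tendsto_succ_div_natCast_of_tendsto_div he).add ho).mul hhalf
    rw [show (L + L) * (1 / 2) = L by ring] at h
    refine h.congr' ?_
    filter_upwards [eventually_ne_atTop 0] with n hn
    rw [sum_range_succ c, sum_range_two_mul, sum_range_succ (fun i => c (2 * i))]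
    push_cast
    field_simp
    ring

noncomputable def renewalCount (s : ℕ → ℝ) (T : ℝ) : ℕ := {n : ℕ | 1 ≤ n ∧ s n ≤ T}.ncard

section Renewal

variable {s : ℕ → ℝ}

theorem renewalCount_eq (hs : Monotone s) {T : ℝ} {N : ℕ} (hN : N = 0 ∨ s N ≤ T)
    (hT : T < s (N + 1)) : renewalCount s T = N := by
  have hset : {n : ℕ | 1 ≤ n ∧ s n ≤ T} = Set.Icc 1 N := by
    ext n
    simp only [Set.mem_ofPred_eq, Set.mem_Icc, and_congr_right_iff]
    intro hn
    constructor
    · intro hsn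
      by_contra! hNn
      exact (hT.trans_le (hs hNn)).not_ge hsn
    · intro hnN
      rcases hN with rfl | hN
      · omega
      · exact (hs hnN).trans hN
  rw [renewalCount, hset, ← Finset.coe_Icc, Set.ncard_coe_finset, Nat.card_Icc,
    Nat.add_sub_cancel]

theorem renewalCount_spec (hs : Monotone s) (htop : Tendsto s atTop atTop) (T : ℝ) :
    (renewalCount s T = 0 ∨ s (renewalCount s T) ≤ T) ∧ T < s (renewalCount s T + 1) := by
  have hex : ∃ N, T < s (N + 1) :=
    ((htop.comp (tendsto_add_atTop_nat 1)).eventually_gt_atTop T).exists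
  have hmin : Nat.find hex = 0 ∨ s (Nat.find hex) ≤ T := by
    rcases Nat.eq_zero_or_eq_succ_pred (Nat.find hex) with h | h
    · exact Or.inl h
    · right
      rw [h]
      exact not_lt.1 (Nat.find_min hex (by omega))
  rw [renewalCount_eq hs hmin (Nat.find_spec hex)]
  exact ⟨hmin, Nat.find_spec hex⟩

theorem tendsto_renewalCount_atTop (hs : Monotone s) (htop : Tendsto s atTop atTop) :
    Tendsto (renewalCount s) atTop atTop := by
  refine tendsto_atTop.2 fun n => ?_
  filter_upwards [eventually_ge_atTop (s n)] with T hT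
  by_contra! hlt
  exact ((renewalCount_spec hs htop T).2.trans_le (hs hlt)).not_ge hT

theorem tendsto_div_renewalCount (hs : Monotone s) {m : ℝ}
    (hlim : Tendsto (fun n => s n / n) atTop (𝓝 m)) (htop : Tendsto s atTop atTop) :
    Tendsto (fun T => T / renewalCount s T) atTop (𝓝 m) := by
  have hN := tendsto_renewalCount_atTop hs htop
  refine tendsto_of_tendsto_of_tendsto_of_le_of_le' (hlim.comp hN)
    ((tendsto_succ_div_natCast_of_tendsto_div hlim).comp hN) ?_ ?_
  · filter_upwards [hN.eventually_ne_atTop 0] with T hT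
    exact div_le_div_of_nonneg_right ((renewalCount_spec hs htop T).1.resolve_left hT)
      (by positivity)
  · filter_upwards with T
    exact div_le_div_of_nonneg_right (renewalCount_spec hs htop T).2.le (by positivity)

theorem tendsto_renewal_reward (hs : Monotone s) {m : ℝ} (hm : 0 < m)
    (hlim : Tendsto (fun n => s n / n) atTop (𝓝 m)) {R : ℕ → ℝ} {L : ℝ}
    (hR : Tendsto (fun n => R n / n) atTop (𝓝 L)) :
    Tendsto (fun T => 1 / T * R (renewalCount s T)) atTop (𝓝 (L / m)) := by
  have htop : Tendsto s atTop atTop :=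
    (hlim.pos_mul_atTop hm tendsto_natCast_atTop_atTop).congr' <| by
      filter_upwards [eventually_ne_atTop 0] with n hn
      field_simp
  have hN := tendsto_renewalCount_atTop hs htop
  have h := (hR.comp hN).mul ((tendsto_div_renewalCount hs hlim htop).inv₀ hm.ne')
  refine h.congr' ?_
  filter_upwards [hN.eventually_ne_atTop 0] with T hT
  simp only [Function.comp_apply]
  field_simp

end Renewal

theorem ProbabilityTheory.strong_law_ae_real_adjacent_pairs {Ω β : Type*} {mΩ : MeasurableSpace Ω}
    {μ : Measure Ω} [MeasurableSpace β] {V : ℕ → Ω → β} (hindep : iIndepFun V μ)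
    (hident : ∀ k, IdentDistrib (V k) (V 0) μ μ) {φ : β × β → ℝ} (hφ : Measurable φ)
    (hint : Integrable (fun ω => φ (V 0 ω, V 1 ω)) μ) :
    ∀ᵐ ω ∂μ, Tendsto (fun n : ℕ => (∑ i ∈ range n, φ (V i ω, V (i + 1) ω)) / n) atTop
      (𝓝 (∫ ω, φ (V 0 ω, V 1 ω) ∂μ)) := by
  have := hindep.isProbabilityMeasure
  -- `(V j, V k)` with `j ≠ k` is distributed as `(V 0, V 1)`, and disjoint such pairs are
  -- independent, so the terms at even and at odd indices each form an i.i.d. sequence.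
  have hpair : ∀ j k, j ≠ k →
      IdentDistrib (fun ω => φ (V j ω, V k ω)) (fun ω => φ (V 0 ω, V 1 ω)) μ μ := fun j k hjk =>
    ((hident j).prodMk ((hident k).trans (hident 1).symm) (hindep.indepFun hjk)
      (hindep.indepFun zero_ne_one)).comp hφ
  have hslln : ∀ r, ∀ᵐ ω ∂μ, Tendsto
      (fun n : ℕ => (∑ i ∈ range n, φ (V (2 * i + r) ω, V (2 * i + r + 1) ω)) / n) atTop
      (𝓝 (∫ ω, φ (V 0 ω, V 1 ω) ∂μ)) := by
    intro r
    have h := strong_law_ae_real (fun i ω => φ (V (2 * i + r) ω, V (2 * i + r + 1) ω))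
      ((hpair (2 * 0 + r) (2 * 0 + r + 1) (by omega)).integrable_iff.2 hint)
      (fun i j hij => (hindep.indepFun_prodMk_prodMk₀ (fun k => (hident k).aemeasurable_fst)
        _ _ _ _ (by omega) (by omega) (by omega) (by omega)).comp hφ hφ)
      (fun i => (hpair _ _ (by omega)).trans (hpair _ _ (by omega)).symm)
    rwa [(hpair _ _ (by omega)).integral_eq] at h
  filter_upwards [hslln 0, hslln 1] with ω h₀ h₁
  exact tendsto_sum_range_div_of_even_odd (by simpa using h₀) h₁

theorem stmt6_general {Ω : Type*} [MeasurableSpace Ω] (μ : Measure Ω) [IsProbabilityMeasure μ]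
    (d : ℝ) (X I : ℕ → Ω → ℝ)
    (hXnonneg : ∀ k ω, 0 ≤ X k ω) (hInonneg : ∀ k ω, 0 ≤ I k ω)
    (hXint : ∀ k, Integrable (X k) μ) (hIint : ∀ k, Integrable (I k) μ)
    (hident : ∀ k, IdentDistrib (fun ω => (X k ω, I k ω)) (fun ω => (X 0 ω, I 0 ω)) μ μ)
    (hindep : iIndepFun
      (fun k ω => (X k ω, I k ω)) μ)
    (hmean : 0 < (∫ ω, X 0 ω ∂μ) + ∫ ω, I 0 ω ∂μ) :
    ∀ᵐ ω ∂μ, Tendsto (fun T : ℝ =>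
        (1 / T) * ∑ k ∈ Finset.Icc 1
          (Set.ncard {n : ℕ | 1 ≤ n ∧ (∑ j ∈ Finset.Icc 1 n, (X j ω + I j ω)) ≤ T}),
            min (max (X (k - 1) ω + I k ω + X k ω - d) 0) (X k ω + I k ω))
      atTop
      (nhds ((∫ ω, min (max (X 0 ω + I 1 ω + X 1 ω - d) 0) (X 1 ω + I 1 ω) ∂μ) /
        ((∫ ω, X 0 ω ∂μ) + ∫ ω, I 0 ω ∂μ))) := by
  have hcycle : ∫ ω, X 1 ω + I 1 ω ∂μ = (∫ ω, X 0 ω ∂μ) + ∫ ω, I 0 ω ∂μ := by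
    rw [integral_add (hXint 1) (hIint 1)]
    exact congrArg₂ (· + ·) ((hident 1).comp measurable_fst).integral_eq
      ((hident 1).comp measurable_snd).integral_eq
  have hgint : Integrable (fun ω => min (max (X 0 ω + I 1 ω + X 1 ω - d) 0) (X 1 ω + I 1 ω)) μ :=
    ((((hXint 0).add (hIint 1)).add (hXint 1)).sub (integrable_const d)).pos_part.inf
      ((hXint 1).add (hIint 1))
  filter_upwards [strong_law_ae_real_adjacent_pairs hindep hident
      (φ := fun p => min (max (p.1.1 + p.2.2 + p.2.1 - d) 0) (p.2.1 + p.2.2)) (by fun_prop) hgint,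
    strong_law_ae_real_adjacent_pairs hindep hident (φ := fun p => p.2.1 + p.2.2) (by fun_prop)
      ((hXint 1).add (hIint 1))] with ω hreward hcycles
  rw [hcycle] at hcycles
  have hmono : Monotone fun n => ∑ j ∈ Icc 1 n, (X j ω + I j ω) := fun a b hab =>
    sum_le_sum_of_subset_of_nonneg (Icc_subset_Icc_right hab) fun j _ _ =>
      add_nonneg (hXnonneg j ω) (hInonneg j ω)
  have hR : Tendsto (fun n : ℕ => (∑ k ∈ Icc 1 n,
      min (max (X (k - 1) ω + I k ω + X k ω - d) 0) (X k ω + I k ω)) / n) atTop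
      (𝓝 (∫ ω, min (max (X 0 ω + I 1 ω + X 1 ω - d) 0) (X 1 ω + I 1 ω) ∂μ)) := by
    simpa [sum_Icc_one_eq_sum_range] using hreward
  exact tendsto_renewal_reward hmono hmean (by simpa [sum_Icc_one_eq_sum_range] using hcycles) hR

/-- Theorem 4 (GI/GI/1/1): with `(X_k, I_k)` i.i.d. pairs of nonnegative integrable random
variables (service and idle times), `g_k = min ((X_{k-1} + I_k + X_k - d)⁺, X_k + I_k)`,
inter-departure times `X_k + I_k` and `M(T)` the number of departures by time `T`, almost
surely `(1/T) ∑_{k=1}^{M(T)} g_k → E[g_1] / (E[X_0] + E[I_0])`. -/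
theorem stmt6 {Ω : Type*} [MeasurableSpace Ω] (μ : Measure Ω) [IsProbabilityMeasure μ]
    (d : ℝ) (hd : 0 ≤ d) (X I : ℕ → Ω → ℝ)
    (hXnonneg : ∀ k ω, 0 ≤ X k ω) (hInonneg : ∀ k ω, 0 ≤ I k ω)
    (hXint : ∀ k, Integrable (X k) μ) (hIint : ∀ k, Integrable (I k) μ)
    (hident : ∀ k, IdentDistrib (fun ω => (X k ω, I k ω)) (fun ω => (X 0 ω, I 0 ω)) μ μ)
    (hindep : iIndepFun
      (fun k ω => (X k ω, I k ω)) μ)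
    (hmean : 0 < (∫ ω, X 0 ω ∂μ) + ∫ ω, I 0 ω ∂μ) :
    ∀ᵐ ω ∂μ, Tendsto (fun T : ℝ =>
        (1 / T) * ∑ k ∈ Finset.Icc 1
          (Set.ncard {n : ℕ | 1 ≤ n ∧ (∑ j ∈ Finset.Icc 1 n, (X j ω + I j ω)) ≤ T}),
            min (max (X (k - 1) ω + I k ω + X k ω - d) 0) (X k ω + I k ω))
      atTop
      (nhds ((∫ ω, min (max (X 0 ω + I 1 ω + X 1 ω - d) 0) (X 1 ω + I 1 ω) ∂μ) /
        ((∫ ω, X 0 ω ∂μ) + ∫ ω, I 0 ω ∂μ))) :=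
  stmt6_general μ d X I hXnonneg hInonneg hXint hIint hident hindep hmean
end

section
/- Let μ > 0 and d ≥ 0. Let X, X', I be mutually independent random variables, all exponentially distributed with rate μ. Then E[ min{(X' + I + X − d)^+, X + I} ] = (μ e^{−μd} / 2) (d + 2/μ)². -/
/-!
Since `X + I ≥ 0`, `min ((X' + I + X - d)⁺, X + I) = (X' + I + X - d)⁺ - (X' - d)⁺`, so the
expectation is a difference of stop-loss transforms `π_ρ(c) = E[(S - c)⁺]`, `S ∼ ρ`, of
`Exp(μ)` and of its threefold convolution. For `ρ ∗ Exp(μ)` one has `π(c) = E[π_ρ(c - Y)]`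
with `Y ∼ Exp(μ)`, and this step preserves the shape `π_ρ(t) = e^{-μt} q(t)` for `t ≥ 0`,
`π_ρ(t) = a - t` for `t < 0`: it replaces `q` by `a + 1/μ + μ ∫₀ᵗ q` and `a` by `a + 1/μ`.
Starting from `q = a = 0` this gives `π(d) = e^{-μd}/μ` for `Exp(μ)` and
`π(d) = e^{-μd}(μd²/2 + 2d + 3/μ)` for the sum of three.
-/

open MeasureTheory ProbabilityTheory Real Set Filter Topology

theorem min_max_sub_zero_eq_sub (L d s : ℝ) (hs : 0 ≤ s) :
    min (max (L - d) 0) s = max (L - d) 0 - max (L - s - d) 0 := by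
  rcases le_total (L - s - d) 0 with h | h
  · rw [max_eq_right h, sub_zero, min_eq_left]
    exact max_le (by linarith) hs
  · rw [max_eq_left h, max_eq_left (by linarith), min_eq_right (by linarith)]
    ring

namespace ProbabilityTheory

theorem expMeasure_eq_withDensity (μ : ℝ) :
    expMeasure μ = (volume.restrict (Ioi 0)).withDensity
      fun x ↦ ((μ * exp (-(μ * x))).toNNReal : ENNReal) := by
  have hpdf : exponentialPDF μ = (Ici 0).indicator fun x ↦ ENNReal.ofReal (μ * exp (-(μ * x))) := by
    ext x
    by_cases hx : 0 ≤ x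
    · simp [exponentialPDF_of_nonneg hx, hx]
    · simp [exponentialPDF_of_neg (not_le.mp hx), hx]
  change volume.withDensity (exponentialPDF μ) = _
  rw [hpdf, withDensity_indicator measurableSet_Ici, Measure.restrict_congr_set Ioi_ae_eq_Ici]
  rfl

theorem ae_pos_expMeasure (μ : ℝ) : ∀ᵐ x ∂expMeasure μ, 0 < x := by
  rw [expMeasure_eq_withDensity]
  exact (withDensity_absolutelyContinuous _ _).ae_le (ae_restrict_mem measurableSet_Ioi)

theorem integral_expMeasure {μ : ℝ} (hμ : 0 < μ) (g : ℝ → ℝ) :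
    ∫ x, g x ∂expMeasure μ = ∫ x in Ioi 0, μ * exp (-(μ * x)) * g x := by
  rw [expMeasure_eq_withDensity, integral_withDensity_eq_integral_smul (by fun_prop)]
  congr with x
  rw [NNReal.smul_def, Real.coe_toNNReal _ (by positivity), smul_eq_mul]

theorem integrable_expMeasure_iff {μ : ℝ} (hμ : 0 < μ) {g : ℝ → ℝ} :
    Integrable g (expMeasure μ) ↔ IntegrableOn (fun x ↦ μ * exp (-(μ * x)) * g x) (Ioi 0) := by
  rw [expMeasure_eq_withDensity, integrable_withDensity_iff_integrable_smul (by fun_prop)]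
  refine integrable_congr (Eventually.of_forall fun x ↦ ?_)
  dsimp only
  rw [NNReal.smul_def, Real.coe_toNNReal _ (by positivity), smul_eq_mul]

theorem hasDerivAt_exp_mul_affine {μ : ℝ} (hμ : μ ≠ 0) (k x : ℝ) :
    HasDerivAt (fun t ↦ -(exp (-(μ * t)) * (t + k + 1 / μ))) (μ * exp (-(μ * x)) * (x + k)) x := by
  have hexp : HasDerivAt (fun t ↦ exp (-(μ * t))) (exp (-(μ * x)) * -μ) x := by
    simpa using ((hasDerivAt_id x).const_mul μ).neg.exp
  have haff : HasDerivAt (fun t ↦ t + k + 1 / μ) 1 x := ((hasDerivAt_id' x).add_const k).add_const _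
  refine (hexp.mul haff).neg.congr_deriv ?_
  field_simp
  ring

theorem tendsto_exp_mul_affine_atTop {μ : ℝ} (hμ : 0 < μ) (k : ℝ) :
    Tendsto (fun t ↦ -(exp (-(μ * t)) * (t + k))) atTop (𝓝 0) := by
  have hlin : Tendsto (fun t ↦ t * exp (-(μ * t))) atTop (𝓝 0) := by
    simpa [Real.rpow_one, neg_mul] using tendsto_rpow_mul_exp_neg_mul_atTop_nhds_zero 1 μ hμ
  have hexp : Tendsto (fun t ↦ exp (-(μ * t))) atTop (𝓝 0) :=
    tendsto_exp_neg_atTop_nhds_zero.comp (tendsto_id.const_mul_atTop hμ)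
  simpa using (hlin.add (hexp.mul_const k)).neg.congr fun t ↦ by ring

theorem integral_Ioi_exp_mul_affine {μ a k : ℝ} (hμ : 0 < μ) (hak : 0 ≤ a + k) :
    ∫ x in Ioi a, μ * exp (-(μ * x)) * (x + k) = exp (-(μ * a)) * (a + k + 1 / μ) := by
  rw [integral_Ioi_of_hasDerivAt_of_nonneg' (fun x _ ↦ hasDerivAt_exp_mul_affine hμ.ne' k x)
    (fun x hx ↦ mul_nonneg (by positivity) (by linarith [mem_Ioi.mp hx]))
    (by simpa only [add_assoc] using tendsto_exp_mul_affine_atTop hμ (k + 1 / μ))]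
  ring

theorem integrableOn_Ioi_exp_mul_affine {μ a k : ℝ} (hμ : 0 < μ) (hak : 0 ≤ a + k) :
    IntegrableOn (fun x ↦ μ * exp (-(μ * x)) * (x + k)) (Ioi a) :=
  integrableOn_Ioi_deriv_of_nonneg' (fun x _ ↦ hasDerivAt_exp_mul_affine hμ.ne' k x)
    (fun x hx ↦ mul_nonneg (by positivity) (by linarith [mem_Ioi.mp hx]))
    (by simpa only [add_assoc] using tendsto_exp_mul_affine_atTop hμ (k + 1 / μ))

theorem integrable_id_expMeasure {μ : ℝ} (hμ : 0 < μ) : Integrable id (expMeasure μ) := by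
  rw [integrable_expMeasure_iff hμ]
  simpa using integrableOn_Ioi_exp_mul_affine hμ (a := 0) (k := 0) (by norm_num)

theorem integral_comp_sub_expMeasure_of_nonpos {μ a c : ℝ} {h : ℝ → ℝ} (hμ : 0 < μ)
    (hneg : ∀ t < 0, h t = a - t) (ha : 0 ≤ a) (hc : c ≤ 0) :
    ∫ y, h (c - y) ∂expMeasure μ = a + 1 / μ - c := by
  have heq : EqOn (fun y ↦ μ * exp (-(μ * y)) * h (c - y))
      (fun y ↦ μ * exp (-(μ * y)) * (y + (a - c))) (Ioi 0) := fun y hy ↦ by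
    simp only [hneg (c - y) (by linarith [mem_Ioi.mp hy])]
    ring
  rw [integral_expMeasure hμ, setIntegral_congr_fun measurableSet_Ioi heq,
    integral_Ioi_exp_mul_affine hμ (by linarith)]
  simp only [mul_zero, neg_zero, exp_zero]
  ring

theorem integral_comp_sub_expMeasure_of_nonneg {μ a c : ℝ} {h q : ℝ → ℝ} (hμ : 0 < μ)
    (hpos : ∀ t, 0 ≤ t → h t = exp (-(μ * t)) * q t) (hneg : ∀ t < 0, h t = a - t)
    (hq : Continuous q) (ha : 0 ≤ a) (hc : 0 ≤ c) :
    ∫ y, h (c - y) ∂expMeasure μ = exp (-(μ * c)) * (a + 1 / μ + μ * ∫ t in 0..c, q t) := by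
  have hhead : EqOn (fun y ↦ μ * exp (-(μ * y)) * h (c - y))
      (fun y ↦ μ * exp (-(μ * c)) * q (c - y)) (Ioc 0 c) := fun y hy ↦ by
    have hexp : exp (-(μ * y)) * exp (-(μ * (c - y))) = exp (-(μ * c)) := by
      rw [← exp_add]; ring_nf
    simp only [hpos (c - y) (by linarith [hy.2]), ← hexp]
    ring
  have htail : EqOn (fun y ↦ μ * exp (-(μ * y)) * h (c - y))
      (fun y ↦ μ * exp (-(μ * y)) * (y + (a - c))) (Ioi c) := fun y hy ↦ by
    simp only [hneg (c - y) (by linarith [mem_Ioi.mp hy])]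
    ring
  have hint_head : IntegrableOn (fun y ↦ μ * exp (-(μ * y)) * h (c - y)) (Ioc 0 c) :=
    (Continuous.integrableOn_Ioc (by fun_prop)).congr_fun hhead.symm measurableSet_Ioc
  have hint_tail : IntegrableOn (fun y ↦ μ * exp (-(μ * y)) * h (c - y)) (Ioi c) :=
    (integrableOn_Ioi_exp_mul_affine hμ (by linarith)).congr_fun htail.symm measurableSet_Ioi
  rw [integral_expMeasure hμ, ← Ioc_union_Ioi_eq_Ioi hc,
    setIntegral_union (Ioc_disjoint_Ioi le_rfl) measurableSet_Ioi hint_head hint_tail,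
    setIntegral_congr_fun measurableSet_Ioc hhead, setIntegral_congr_fun measurableSet_Ioi htail,
    integral_Ioi_exp_mul_affine hμ (by linarith), ← intervalIntegral.integral_of_le hc,
    intervalIntegral.integral_const_mul, intervalIntegral.integral_comp_sub_left]
  simp only [sub_self, sub_zero]
  ring

noncomputable def stopLoss (ρ : Measure ℝ) (c : ℝ) : ℝ := ∫ s, max (s - c) 0 ∂ρ

theorem integrable_id_conv {ρ ν : Measure ℝ} [IsFiniteMeasure ρ] [IsFiniteMeasure ν]
    (hρ : Integrable id ρ) (hν : Integrable id ν) : Integrable id (ρ ∗ ν) := by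
  rw [Measure.conv, integrable_map_measure aestronglyMeasurable_id (by fun_prop)]
  exact (hρ.comp_fst ν).add (hν.comp_snd ρ)

theorem integrable_max_sub_zero {ρ : Measure ℝ} [IsFiniteMeasure ρ] (hρ : Integrable id ρ)
    (c : ℝ) : Integrable (fun s ↦ max (s - c) 0) ρ :=
  (hρ.sub (integrable_const c)).pos_part

theorem stopLoss_conv {ρ ν : Measure ℝ} [IsFiniteMeasure ρ] [IsFiniteMeasure ν]
    (hρ : Integrable id ρ) (hν : Integrable id ν) (c : ℝ) :
    stopLoss (ρ ∗ ν) c = ∫ y, stopLoss ρ (c - y) ∂ν := by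
  rw [stopLoss, Measure.conv_comm,
    integral_conv (integrable_max_sub_zero (integrable_id_conv hν hρ) c)]
  congr with y
  congr with s
  ring_nf

section

variable {μ c : ℝ}

theorem stopLoss_expMeasure_of_neg (hμ : 0 < μ) (hc : c < 0) :
    stopLoss (expMeasure μ) c = 1 / μ - c := by
  have := integral_comp_sub_expMeasure_of_nonpos (h := fun t ↦ max (-t) 0) (a := 0) hμ
    (fun t ht ↦ by simp [ht.le]) le_rfl hc.le
  simpa [stopLoss] using this

theorem stopLoss_expMeasure_of_nonneg (hμ : 0 < μ) (hc : 0 ≤ c) :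
    stopLoss (expMeasure μ) c = exp (-(μ * c)) / μ := by
  have := integral_comp_sub_expMeasure_of_nonneg (h := fun t ↦ max (-t) 0) (q := 0) (a := 0) hμ
    (fun t ht ↦ by simp [ht]) (fun t ht ↦ by simp [ht.le]) continuous_const le_rfl hc
  simpa [stopLoss, div_eq_mul_inv] using this

theorem stopLoss_expMeasure_conv_of_neg (hμ : 0 < μ) (hc : c < 0) :
    stopLoss (expMeasure μ ∗ expMeasure μ) c = 2 / μ - c := by
  have := isProbabilityMeasure_expMeasure hμ
  rw [stopLoss_conv (integrable_id_expMeasure hμ) (integrable_id_expMeasure hμ),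
    integral_comp_sub_expMeasure_of_nonpos hμ (fun t ht ↦ stopLoss_expMeasure_of_neg hμ ht)
      (by positivity) hc.le]
  ring

theorem stopLoss_expMeasure_conv_of_nonneg (hμ : 0 < μ) (hc : 0 ≤ c) :
    stopLoss (expMeasure μ ∗ expMeasure μ) c = exp (-(μ * c)) * (c + 2 / μ) := by
  have := isProbabilityMeasure_expMeasure hμ
  rw [stopLoss_conv (integrable_id_expMeasure hμ) (integrable_id_expMeasure hμ),
    integral_comp_sub_expMeasure_of_nonneg hμ (q := fun _ ↦ 1 / μ)
      (fun t ht ↦ by rw [stopLoss_expMeasure_of_nonneg hμ ht, div_eq_mul_one_div])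
      (fun t ht ↦ stopLoss_expMeasure_of_neg hμ ht) continuous_const (by positivity) hc]
  simp only [intervalIntegral.integral_const, sub_zero, smul_eq_mul]
  field_simp
  ring

theorem stopLoss_expMeasure_conv_conv_of_nonneg (hμ : 0 < μ) (hc : 0 ≤ c) :
    stopLoss ((expMeasure μ ∗ expMeasure μ) ∗ expMeasure μ) c =
      exp (-(μ * c)) * (μ * c ^ 2 / 2 + 2 * c + 3 / μ) := by
  have := isProbabilityMeasure_expMeasure hμ
  have hν := integrable_id_expMeasure hμ
  rw [stopLoss_conv (integrable_id_conv hν hν) hν,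
    integral_comp_sub_expMeasure_of_nonneg hμ (q := fun t ↦ t + 2 / μ)
      (fun t ht ↦ stopLoss_expMeasure_conv_of_nonneg hμ ht)
      (fun t ht ↦ stopLoss_expMeasure_conv_of_neg hμ ht) (by fun_prop) (by positivity) hc,
    intervalIntegral.integral_add intervalIntegral.intervalIntegrable_id intervalIntegrable_const]
  simp only [integral_id, intervalIntegral.integral_const, sub_zero, smul_eq_mul]
  field_simp
  ring

end

theorem HasLaw.integrable_comp {Ω : Type*} [MeasurableSpace Ω] {P : Measure Ω}
    {X : Ω → ℝ} {ρ : Measure ℝ} (hX : HasLaw X ρ P) {f : ℝ → ℝ} (hf : Integrable f ρ) :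
    Integrable (f ∘ X) P := by
  rw [← hX.map_eq] at hf
  exact (integrable_map_measure hf.1 hX.aemeasurable).mp hf

theorem HasLaw.integral_max_sub_zero {Ω : Type*} [MeasurableSpace Ω]
    {P : Measure Ω} {X : Ω → ℝ} {ρ : Measure ℝ} (hX : HasLaw X ρ P) (c : ℝ) :
    ∫ ω, max (X ω - c) 0 ∂P = stopLoss ρ c :=
  hX.integral_comp (f := fun s ↦ max (s - c) 0) (by fun_prop)

end ProbabilityTheory

theorem stmt11_general {Ω : Type*} [MeasurableSpace Ω] (P : Measure Ω)
    (mu d : ℝ) (hmu : 0 < mu) (hd : 0 ≤ d)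
    (X X' I : Ω → ℝ) (hX : Measurable X) (hX' : Measurable X') (hI : Measurable I)
    (hindep : iIndepFun (m := fun _ : Fin 3 => (inferInstance : MeasurableSpace ℝ)) ![X, X', I] P)
    (hXd : P.map X = expMeasure mu) (hX'd : P.map X' = expMeasure mu)
    (hId : P.map I = expMeasure mu) :
    (∫ ω, min (max (X' ω + I ω + X ω - d) 0) (X ω + I ω) ∂P) =
      (mu * exp (-(mu * d)) / 2) * (d + 2 / mu) ^ 2 := by
  have := isProbabilityMeasure_expMeasure hmu
  have hν := integrable_id_expMeasure hmu
  have lawX : HasLaw X (expMeasure mu) P := ⟨hX.aemeasurable, hXd⟩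
  have lawX' : HasLaw X' (expMeasure mu) P := ⟨hX'.aemeasurable, hX'd⟩
  have lawI : HasLaw I (expMeasure mu) P := ⟨hI.aemeasurable, hId⟩
  have hX'I : IndepFun X' I P := hindep.indepFun (i := 1) (j := 2) (by decide)
  have hX'IX : IndepFun (fun ω ↦ X' ω + I ω) X P :=
    hindep.indepFun_add_left (fun k ↦ by fin_cases k <;> assumption) 1 2 0 (by decide) (by decide)
  have lawS : HasLaw (fun ω ↦ X' ω + I ω + X ω)
      ((expMeasure mu ∗ expMeasure mu) ∗ expMeasure mu) P :=
    hX'IX.hasLaw_fun_add (hX'I.hasLaw_fun_add lawX' lawI) lawX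
  have hsplit : (fun ω ↦ min (max (X' ω + I ω + X ω - d) 0) (X ω + I ω)) =ᵐ[P]
      fun ω ↦ max (X' ω + I ω + X ω - d) 0 - max (X' ω - d) 0 := by
    filter_upwards [ae_of_ae_map hX.aemeasurable (hXd ▸ ae_pos_expMeasure mu),
      ae_of_ae_map hI.aemeasurable (hId ▸ ae_pos_expMeasure mu)] with ω hXω hIω
    rw [min_max_sub_zero_eq_sub _ _ _ (by positivity),
      show X' ω + I ω + X ω - (X ω + I ω) = X' ω by ring]
  have hintS : Integrable (fun ω ↦ max (X' ω + I ω + X ω - d) 0) P :=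
    lawS.integrable_comp <|
      integrable_max_sub_zero (integrable_id_conv (integrable_id_conv hν hν) hν) d
  have hintX' : Integrable (fun ω ↦ max (X' ω - d) 0) P :=
    lawX'.integrable_comp (integrable_max_sub_zero hν d)
  rw [integral_congr_ae hsplit, integral_sub hintS hintX', lawS.integral_max_sub_zero,
    lawX'.integral_max_sub_zero, stopLoss_expMeasure_conv_conv_of_nonneg hmu hd,
    stopLoss_expMeasure_of_nonneg hmu hd]
  field_simp
  ring

/-- Corollary 3 (M/M/1/1, case `λ = μ`): with `X, X', I ~ Exp(μ)` mutually independent,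
`E[min ((X' + I + X - d)⁺, X + I)] = (μ e^{-μd}/2)(d + 2/μ)²`. -/
theorem stmt11 {Ω : Type*} [MeasurableSpace Ω] (P : Measure Ω) [IsProbabilityMeasure P]
    (mu d : ℝ) (hmu : 0 < mu) (hd : 0 ≤ d)
    (X X' I : Ω → ℝ) (hX : Measurable X) (hX' : Measurable X') (hI : Measurable I)
    (hindep : iIndepFun (m := fun _ : Fin 3 => (inferInstance : MeasurableSpace ℝ)) ![X, X', I] P)
    (hXd : P.map X = expMeasure mu) (hX'd : P.map X' = expMeasure mu)
    (hId : P.map I = expMeasure mu) :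
    (∫ ω, min (max (X' ω + I ω + X ω - d) 0) (X ω + I ω) ∂P) =
      (mu * exp (-(mu * d)) / 2) * (d + 2 / mu) ^ 2 :=
  stmt11_general P mu d hmu hd X X' I hX hX' hI hindep hXd hX'd hId
end
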